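/- Let H ∈ (1/2, 1), M ∈ ℝ, t > 0 and set α_H := H(2H − 1). Then α_H (1 ∨ e^{M t}) ∫₀ᵗ ∫₀ᵘ 𝔪_M(u,v) (u − v)^{2H−2} dv du ≤ t^{2H−1} 𝔪_{H,M}(t), where 𝔪_M(u,v) := −(1/M) e^{M v} if M < 0, 𝔪_M(u,v) := u − v if M = 0, 𝔪_M(u,v) := (1/M) e^{M u} if M > 0, and 𝔪_{H,M}(t) := 1/(M²(2H−1)) if M < 0, 𝔪_{H,M}(t) := t²/(2H(2H+1)) if M = 0, 𝔪_{H,M}(t) := e^{2Mt}/(M²(2H−1)) if M > 0. -/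

import Mathlib

/-!
For `M ≥ 0` the kernel `𝔪_M(u, v)` is constant in `v` or equal to `u - v`, so the inner integral
is explicit, e.g. `∫₀ᵘ (u - v)^{2H-2} dv = u^{2H-1}/(2H-1)`; bounding `u^{2H-1} ≤ t^{2H-1}`
(`M > 0`) or integrating once more (`M = 0`) gives the claim. For `M < 0` the order of integration
is exchanged so that the kernel is integrated first: `∫_w^t e^{M(u-w)} du ≤ 1/|M|`, and what
remains is `∫₀ᵗ w^{2H-2} dw = t^{2H-1}/(2H-1)`. In all cases the prefactor `α_H = H(2H-1)` is at
most `1` and is dropped.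
-/

open MeasureTheory

/-- The kernel `𝔪_M(u, v)`. -/
noncomputable def mMfun (M u v : ℝ) : ℝ :=
  if M < 0 then -(1 / M) * Real.exp (M * v)
  else if M = 0 then u - v
  else (1 / M) * Real.exp (M * u)

/-- The constant `𝔪_{H,M}(t)`. -/
noncomputable def mHM (H M t : ℝ) : ℝ :=
  if M < 0 then 1 / (M ^ 2 * (2 * H - 1))
  else if M = 0 then t ^ 2 / (2 * H * (2 * H + 1))
  else Real.exp (2 * M * t) / (M ^ 2 * (2 * H - 1))

open intervalIntegral Real Set
open scoped Interval

lemma integral_sub_rpow {p : ℝ} (hp : -1 < p) (u : ℝ) :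
    ∫ v in (0 : ℝ)..u, (u - v) ^ p = u ^ (p + 1) / (p + 1) := by
  rw [integral_comp_sub_left (fun x ↦ x ^ p), sub_self, sub_zero, integral_rpow (Or.inl hp),
    zero_rpow (by linarith), sub_zero]

lemma integral_integral_sub_rpow {p : ℝ} (hp : -1 < p) (t : ℝ) :
    ∫ u in (0 : ℝ)..t, ∫ v in (0 : ℝ)..u, (u - v) ^ p = t ^ (p + 2) / ((p + 1) * (p + 2)) := by
  simp_rw [integral_sub_rpow hp, intervalIntegral.integral_div,
    integral_rpow (Or.inl (by linarith : -1 < p + 1)), zero_rpow (by linarith : p + 1 + 1 ≠ 0),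
    sub_zero, div_div, show p + 1 + 1 = p + 2 by ring, mul_comm (p + 2)]

lemma integral_exp_mul {c : ℝ} (hc : c ≠ 0) (a b : ℝ) :
    ∫ x in a..b, exp (c * x) = (exp (c * b) - exp (c * a)) / c := by
  rw [integral_comp_mul_left (fun x ↦ exp x) hc, integral_exp, smul_eq_mul, inv_mul_eq_div]

lemma integral_exp_mul_mul_sub_rpow (M p u : ℝ) :
    ∫ v in (0 : ℝ)..u, exp (M * v) * (u - v) ^ p
      = (∫ w in (0 : ℝ)..u, exp (-M * w) * w ^ p) * exp (M * u) := by
  rw [← intervalIntegral.integral_mul_const]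
  have hsub :=
    integral_comp_sub_left (fun w ↦ exp (-M * w) * w ^ p * exp (M * u)) (a := 0) (b := u) u
  simp only [sub_self, sub_zero] at hsub
  rw [← hsub]
  refine integral_congr fun v _ ↦ ?_
  rw [mul_right_comm, ← exp_add]
  ring_nf

/-- Fubini on the triangle `a ≤ w ≤ u ≤ b`, obtained by integrating by parts against the primitive
of `g`, so that no integrability on the square is needed. -/
lemma integral_primitive_mul {f g : ℝ → ℝ} {a b : ℝ} (hab : a ≤ b) (hf : Continuous f)
    (hg : IntervalIntegrable g volume a b) (hgc : ∀ x ∈ Ioo a b, ContinuousAt g x) :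
    ∫ u in a..b, (∫ w in a..u, g w) * f u = ∫ w in a..b, g w * ∫ u in w..b, f u := by
  have hF : ∀ x, HasDerivAt (fun u ↦ ∫ v in b..u, f v) (f x) x :=
    fun x ↦ (hf.integral_hasStrictDerivAt b x).hasDerivAt
  have hG : ∀ x ∈ Ioo (min a b) (max a b), HasDerivAt (fun u ↦ ∫ w in a..u, g w) (g x) x := by
    rw [min_eq_left hab, max_eq_right hab]
    intro x hx
    refine integral_hasDerivAt_right (hg.mono_set ?_) ?_ (hgc x hx)
    · rw [uIcc_of_le hab, uIcc_of_le hx.1.le]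
      exact Icc_subset_Icc_right hx.2.le
    · exact ContinuousOn.stronglyMeasurableAtFilter isOpen_Ioo
        (fun y hy ↦ (hgc y hy).continuousWithinAt) x hx
  rw [integral_mul_deriv_eq_deriv_mul_of_hasDerivAt
    (continuousOn_primitive_interval' hg left_mem_uIcc)
    (fun x _ ↦ (hF x).continuousAt.continuousWithinAt) hG (fun x _ ↦ hF x) hg
    (hf.intervalIntegrable a b)]
  simp only [integral_same, zero_mul, sub_zero, mul_zero, zero_sub,
    ← intervalIntegral.integral_neg]
  refine integral_congr fun w _ ↦ ?_
  rw [integral_symm b w, mul_neg, mul_comm]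

lemma integral_integral_exp_mul_sub_rpow_le_of_neg {M p t : ℝ} (hM : M < 0) (hp : -1 < p)
    (ht : 0 ≤ t) :
    ∫ u in (0 : ℝ)..t, ∫ v in (0 : ℝ)..u, exp (M * v) * (u - v) ^ p
      ≤ t ^ (p + 1) / (-M * (p + 1)) := by
  have hg : IntervalIntegrable (fun w ↦ exp (-M * w) * w ^ p) volume 0 t :=
    (intervalIntegrable_rpow' hp).continuousOn_mul (by fun_prop)
  have hgc : ∀ w ∈ Ioo 0 t, ContinuousAt (fun w ↦ exp (-M * w) * w ^ p) w := fun w hw ↦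
    (continuous_exp.comp (continuous_const_mul _)).continuousAt.mul
      (continuousAt_rpow_const _ _ (Or.inl hw.1.ne'))
  simp_rw [integral_exp_mul_mul_sub_rpow]
  rw [integral_primitive_mul ht (by fun_prop) hg hgc]
  simp_rw [integral_exp_mul hM.ne]
  calc _ ≤ ∫ w in (0 : ℝ)..t, w ^ p / -M := by
        refine integral_mono_on ht (hg.mul_continuousOn (by fun_prop))
          ((intervalIntegrable_rpow' hp).div_const _) fun w hw ↦ ?_
        have hexp : exp (-M * w) * (exp (M * t) - exp (M * w)) = exp (M * (t - w)) - 1 := by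
          rw [mul_sub, ← exp_add, ← exp_add, neg_mul, neg_add_cancel, exp_zero, mul_sub,
            neg_add_eq_sub]
        have hMpos : 0 < -M := neg_pos.2 hM
        calc exp (-M * w) * w ^ p * ((exp (M * t) - exp (M * w)) / M)
            = w ^ p * ((1 - exp (M * (t - w))) / -M) := by
              rw [div_neg, ← neg_div, neg_sub, ← hexp]; ring
          _ ≤ w ^ p * (1 / -M) := by
              gcongr
              · exact rpow_nonneg hw.1 p
              · linarith [exp_pos (M * (t - w))]
          _ = w ^ p / -M := mul_one_div _ _
    _ = t ^ (p + 1) / (-M * (p + 1)) := by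
        rw [intervalIntegral.integral_div, integral_rpow (Or.inl hp),
          zero_rpow (by linarith), sub_zero, div_div, mul_comm]

lemma integral_integral_exp_mul_sub_rpow_le_of_pos {M p t : ℝ} (hM : 0 < M) (hp : -1 < p)
    (ht : 0 ≤ t) :
    ∫ u in (0 : ℝ)..t, ∫ v in (0 : ℝ)..u, exp (M * u) * (u - v) ^ p
      ≤ exp (M * t) * t ^ (p + 1) / (M * (p + 1)) := by
  have hp1 : 0 < p + 1 := by linarith
  simp_rw [intervalIntegral.integral_const_mul, integral_sub_rpow hp]
  calc _ ≤ ∫ u in (0 : ℝ)..t, exp (M * u) * (t ^ (p + 1) / (p + 1)) := by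
        refine integral_mono_on ht ?_ (Continuous.intervalIntegrable (by fun_prop) _ _)
          fun u hu ↦ ?_
        · exact ((continuous_exp.comp (continuous_const_mul M)).mul
            ((continuous_rpow_const hp1.le).div_const _)).intervalIntegrable _ _
        · obtain ⟨hu0, hut⟩ := hu
          gcongr
    _ = (exp (M * t) - 1) / M * (t ^ (p + 1) / (p + 1)) := by
        rw [intervalIntegral.integral_mul_const, integral_exp_mul hM.ne', mul_zero, exp_zero]
    _ ≤ exp (M * t) / M * (t ^ (p + 1) / (p + 1)) := by gcongr; linarith
    _ = exp (M * t) * t ^ (p + 1) / (M * (p + 1)) := by rw [div_mul_div_comm]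

lemma mMfun_nonneg (M : ℝ) {u v : ℝ} (h : v ≤ u) : 0 ≤ mMfun M u v := by
  unfold mMfun
  split_ifs with hneg
  · exact mul_nonneg (neg_nonneg.2 (one_div_nonpos.2 hneg.le)) (exp_pos _).le
  · exact sub_nonneg.2 h
  · exact mul_nonneg (one_div_nonneg.2 (not_lt.1 hneg)) (exp_pos _).le

lemma integral_integral_mMfun_mul_sub_rpow_nonneg (M p : ℝ) {t : ℝ} (ht : 0 ≤ t) :
    0 ≤ ∫ u in (0 : ℝ)..t, ∫ v in (0 : ℝ)..u, mMfun M u v * (u - v) ^ p :=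
  integral_nonneg ht fun _ hu ↦ integral_nonneg hu.1 fun _ hv ↦
    mul_nonneg (mMfun_nonneg M hv.2) (rpow_nonneg (sub_nonneg.2 hv.2) _)

lemma max_one_exp_mul_integral_integral_mMfun_le_of_neg {H M t : ℝ} (hM : M < 0)
    (hH : 1 / 2 < H) (ht : 0 ≤ t) :
    max 1 (exp (M * t)) *
        ∫ u in (0 : ℝ)..t, ∫ v in (0 : ℝ)..u, mMfun M u v * (u - v) ^ (2 * H - 2)
      ≤ t ^ (2 * H - 1) * mHM H M t := by
  have hmax : max 1 (exp (M * t)) = 1 :=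
    max_eq_left (exp_le_one_iff.2 (mul_nonpos_of_nonpos_of_nonneg hM.le ht))
  have hI := integral_integral_exp_mul_sub_rpow_le_of_neg hM (by linarith : -1 < 2 * H - 2) ht
  rw [show 2 * H - 2 + 1 = 2 * H - 1 by ring] at hI
  simp only [mMfun, mHM, if_pos hM, hmax, one_mul, mul_assoc, intervalIntegral.integral_const_mul]
  calc _ ≤ -(1 / M) * (t ^ (2 * H - 1) / (-M * (2 * H - 1))) := by
        gcongr
        exact neg_nonneg.2 (one_div_nonpos.2 hM.le)
    _ = t ^ (2 * H - 1) * (1 / (M ^ 2 * (2 * H - 1))) := by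
        field_simp

lemma max_one_exp_mul_integral_integral_mMfun_zero {H t : ℝ} (hH : 1 / 2 < H) (ht : 0 ≤ t) :
    max 1 (exp (0 * t)) *
        ∫ u in (0 : ℝ)..t, ∫ v in (0 : ℝ)..u, mMfun 0 u v * (u - v) ^ (2 * H - 2)
      = t ^ (2 * H - 1) * mHM H 0 t := by
  simp only [mMfun, mHM, lt_irrefl, if_false, if_true, zero_mul, exp_zero, max_self, one_mul]
  calc _ = ∫ u in (0 : ℝ)..t, ∫ v in (0 : ℝ)..u, (u - v) ^ (2 * H - 1) := by
        refine integral_congr fun u hu ↦ integral_congr fun v hv ↦ ?_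
        rw [uIcc_of_le ht] at hu
        rw [uIcc_of_le hu.1] at hv
        rw [show 2 * H - 1 = 2 * H - 2 + 1 by ring,
          rpow_add_one' (sub_nonneg.2 hv.2) (by linarith), mul_comm]
    _ = t ^ (2 * H - 1) * (t ^ 2 / (2 * H * (2 * H + 1))) := by
        rw [integral_integral_sub_rpow (by linarith) t,
          show 2 * H - 1 + 2 = 2 * H - 1 + (2 : ℕ) by norm_num, rpow_add_natCast' ht (by linarith)]
        ring_nf

lemma max_one_exp_mul_integral_integral_mMfun_le_of_pos {H M t : ℝ} (hM : 0 < M)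
    (hH : 1 / 2 < H) (ht : 0 ≤ t) :
    max 1 (exp (M * t)) *
        ∫ u in (0 : ℝ)..t, ∫ v in (0 : ℝ)..u, mMfun M u v * (u - v) ^ (2 * H - 2)
      ≤ t ^ (2 * H - 1) * mHM H M t := by
  have hmax : max 1 (exp (M * t)) = exp (M * t) :=
    max_eq_right (one_le_exp (mul_nonneg hM.le ht))
  have hI := integral_integral_exp_mul_sub_rpow_le_of_pos hM (by linarith : -1 < 2 * H - 2) ht
  rw [show 2 * H - 2 + 1 = 2 * H - 1 by ring] at hI
  simp only [mMfun, mHM, if_neg (not_lt.2 hM.le), if_neg hM.ne', hmax]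
  simp only [mul_assoc (1 / M), intervalIntegral.integral_const_mul] at hI ⊢
  calc _ ≤ exp (M * t) * (1 / M * (exp (M * t) * t ^ (2 * H - 1) / (M * (2 * H - 1)))) := by
        gcongr
    _ = t ^ (2 * H - 1) * (exp (2 * M * t) / (M ^ 2 * (2 * H - 1))) := by
        rw [show 2 * M * t = M * t + M * t by ring, exp_add]
        field_simp

/-- The double-integral bound
`α_H (1 ∨ e^{Mt}) ∫₀ᵗ ∫₀ᵘ 𝔪_M(u,v) (u-v)^{2H-2} dv du ≤ t^{2H-1} 𝔪_{H,M}(t)`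
with `α_H = H (2H - 1)`. -/
theorem double_integral_bound (H M t : ℝ) (hH : H ∈ Set.Ioo (1 / 2 : ℝ) 1) (ht : 0 < t) :
    H * (2 * H - 1) * max 1 (Real.exp (M * t)) *
        ∫ u in (0 : ℝ)..t, ∫ v in (0 : ℝ)..u, mMfun M u v * (u - v) ^ (2 * H - 2) ≤
      t ^ (2 * H - 1) * mHM H M t := by
  obtain ⟨hH₁, hH₂⟩ := hH
  have hα : H * (2 * H - 1) ≤ 1 := by nlinarith
  have hI := integral_integral_mMfun_mul_sub_rpow_nonneg M (2 * H - 2) ht.le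
  calc _ ≤ 1 * max 1 (exp (M * t)) *
        ∫ u in (0 : ℝ)..t, ∫ v in (0 : ℝ)..u, mMfun M u v * (u - v) ^ (2 * H - 2) := by
        gcongr
    _ ≤ t ^ (2 * H - 1) * mHM H M t := by
        rw [one_mul]
        rcases lt_trichotomy M 0 with hM | rfl | hM
        · exact max_one_exp_mul_integral_integral_mMfun_le_of_neg hM hH₁ ht.le
        · exact (max_one_exp_mul_integral_integral_mMfun_zero hH₁ ht.le).le
        · exact max_one_exp_mul_integral_integral_mMfun_le_of_pos hM hH₁ ht.le
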